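/- arXiv:2309.13493 — 3 statements merged into one kernel-verified Lean document; each statement's English description precedes it below -/
import Mathlib

section
/- For every integer k ≥ 2 and every real λ > 0, no integer m with 1 ≤ m ≤ k−1 is a mode of the Poisson distribution of order k with parameter λ; consequently every nonzero mode m satisfies m ≥ k. -/
/-- Scaled pmf of the Poisson distribution of order `k`:
`h_k(n;λ) = Σ λ^(n₁+⋯+n_k)/(n₁!⋯n_k!)`, summed over all `k`-tuples `(n₁,…,n_k)`
of nonnegative integers with `n₁ + 2n₂ + ⋯ + k·n_k = n`.
(Each `n_i` is at most `n` whenever the constraint holds, so the range is exhaustive.) -/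
noncomputable def poissonOrderH (k n : ℕ) (lam : ℝ) : ℝ :=
  ∑ t ∈ (Fintype.piFinset fun _ : Fin k => Finset.range (n + 1)) |>.filter
      (fun t => ∑ i : Fin k, ((i : ℕ) + 1) * t i = n),
    lam ^ (∑ i : Fin k, t i) / ∏ i : Fin k, (Nat.factorial (t i) : ℝ)

/-- Pmf of the Poisson distribution of order `k`: `f_k(n;λ) = e^{-kλ} h_k(n;λ)`. -/
noncomputable def poissonOrderPmf (k n : ℕ) (lam : ℝ) : ℝ :=
  Real.exp (-(k * lam)) * poissonOrderH k n lam

/-- `m` is a mode of the Poisson distribution of order `k` with parameter `lam`. -/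
def IsMode (k : ℕ) (lam : ℝ) (m : ℕ) : Prop :=
  ∀ n : ℕ, poissonOrderPmf k n lam ≤ poissonOrderPmf k m lam

/-! A tuple `t` with `∑ (i+1) tᵢ = m` is a partition of `m` with `tᵢ` parts of size `i+1`.
For `0 < m < k`, replace one copy of the largest part `j+1` by a part `j+1+(k-m)`. This gives a
partition of `k` whose new part is its unique largest one, so the map is injective; it keeps the
number of parts and does not increase `∏ tᵢ!`, so it does not decrease the summand of `h_k`.
Its image misses the partition `(k)`, hence `h_k(m;λ) < h_k(k;λ)` and `m` is not a mode. -/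

open Finset

theorem Finset.sum_lt_sum_of_injOn {ι κ M : Type*} [AddCommMonoid M] [PartialOrder M]
    [IsOrderedCancelAddMonoid M] [DecidableEq κ]
    {s : Finset ι} {t : Finset κ} {f : ι → M} {g : κ → M} (e : ι → κ)
    (he : Set.InjOn e s) (hest : Set.MapsTo e s t) (hfg : ∀ i ∈ s, f i ≤ g (e i))
    {b : κ} (hbt : b ∈ t) (hbe : ∀ i ∈ s, e i ≠ b) (hb : 0 < g b) (hg : ∀ j ∈ t, 0 ≤ g j) :
    ∑ i ∈ s, f i < ∑ j ∈ t, g j :=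
  calc ∑ i ∈ s, f i ≤ ∑ i ∈ s, g (e i) := sum_le_sum hfg
    _ = ∑ j ∈ s.image e, g j := (sum_image he).symm
    _ < ∑ j ∈ t, g j := by
      refine sum_lt_sum_of_subset (image_subset_iff.2 hest) hbt ?_ hb fun j hj _ => hg j hj
      simpa only [mem_image, not_exists, not_and] using hbe

namespace PoissonOrder

variable {k : ℕ}

def weight (t : Fin k → ℕ) : ℕ := ∑ i : Fin k, ((i : ℕ) + 1) * t i

noncomputable def term (lam : ℝ) (t : Fin k → ℕ) : ℝ :=
  lam ^ (∑ i, t i) / ∏ i, ((t i).factorial : ℝ)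

def tuples (k n : ℕ) : Finset (Fin k → ℕ) :=
  (Fintype.piFinset fun _ : Fin k => range (n + 1)).filter fun t => weight t = n

theorem poissonOrderH_eq_sum_tuples (n : ℕ) (lam : ℝ) :
    poissonOrderH k n lam = ∑ t ∈ tuples k n, term lam t := rfl

theorem mul_apply_le_weight (t : Fin k → ℕ) (i : Fin k) : ((i : ℕ) + 1) * t i ≤ weight t :=
  single_le_sum (f := fun i : Fin k => ((i : ℕ) + 1) * t i) (fun _ _ => Nat.zero_le _) (mem_univ i)

theorem apply_le_weight (t : Fin k → ℕ) (i : Fin k) : t i ≤ weight t :=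
  (Nat.le_mul_of_pos_left _ i.val.succ_pos).trans (mul_apply_le_weight t i)

theorem mem_tuples {n : ℕ} {t : Fin k → ℕ} : t ∈ tuples k n ↔ weight t = n := by
  simp only [tuples, mem_filter, Fintype.mem_piFinset, mem_range, and_iff_right_iff_imp]
  rintro rfl i
  exact Nat.lt_succ_of_le (apply_le_weight t i)

theorem weight_add (t u : Fin k → ℕ) : weight (t + u) = weight t + weight u := by
  simp only [weight, Pi.add_apply, mul_add, sum_add_distrib]

theorem weight_single (i : Fin k) (c : ℕ) : weight (Pi.single i c) = ((i : ℕ) + 1) * c := by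
  simp [weight, Pi.single_apply, mul_ite]

theorem term_pos {lam : ℝ} (hlam : 0 < lam) (t : Fin k → ℕ) : 0 < term lam t := by
  unfold term; positivity

theorem term_le_term {lam : ℝ} (hlam : 0 ≤ lam) {t u : Fin k → ℕ}
    (hsum : ∑ i, u i = ∑ i, t i) (hfac : ∀ i, (u i).factorial ≤ (t i).factorial) :
    term lam t ≤ term lam u := by
  unfold term
  rw [hsum]
  refine div_le_div_of_nonneg_left (by positivity) (by positivity) ?_
  exact_mod_cast prod_le_prod' fun i _ => hfac i

-- `0` when `t = 0`
def topIdx (t : Fin k → ℕ) : ℕ := (univ.filter fun i => t i ≠ 0).sup Fin.val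

theorem le_topIdx {t : Fin k → ℕ} {i : Fin k} (h : t i ≠ 0) : (i : ℕ) ≤ topIdx t :=
  le_sup (f := Fin.val) (mem_filter.2 ⟨mem_univ i, h⟩)

theorem apply_eq_zero_of_topIdx_lt {t : Fin k → ℕ} {i : Fin k} (h : topIdx t < i) : t i = 0 :=
  by_contra fun hi => (le_topIdx hi).not_gt h

theorem topIdx_le {t : Fin k → ℕ} {n : ℕ} (h : ∀ i, t i ≠ 0 → (i : ℕ) ≤ n) : topIdx t ≤ n :=
  Finset.sup_le fun i hi => h i (mem_filter.1 hi).2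

theorem exists_val_eq_topIdx {t : Fin k → ℕ} (ht : t ≠ 0) :
    ∃ j : Fin k, (j : ℕ) = topIdx t ∧ t j ≠ 0 := by
  obtain ⟨i, hi⟩ : ∃ i, t i ≠ 0 := Function.ne_iff.1 ht
  obtain ⟨j, hj, hjt⟩ := exists_mem_eq_sup (univ.filter fun i => t i ≠ 0)
    ⟨i, mem_filter.2 ⟨mem_univ i, hi⟩⟩ Fin.val
  exact ⟨j, hjt.symm, (mem_filter.1 hj).2⟩

theorem topIdx_lt_weight {t : Fin k → ℕ} (ht : t ≠ 0) : topIdx t < weight t := by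
  obtain ⟨j, hj, htj⟩ := exists_val_eq_topIdx ht
  have := mul_apply_le_weight t j
  have := Nat.le_mul_of_pos_right ((j : ℕ) + 1) (Nat.pos_of_ne_zero htj)
  omega

def raiseTop (d : ℕ) (t : Fin k → ℕ) : Fin k → ℕ := fun i =>
  if (i : ℕ) = topIdx t + d then 1 else if (i : ℕ) = topIdx t then t i - 1 else t i

section raiseTop

variable {d : ℕ} {t : Fin k → ℕ}

theorem raiseTop_add_single (hd : 0 < d) {j j' : Fin k} (hj : (j : ℕ) = topIdx t)
    (htj : t j ≠ 0) (hj' : (j' : ℕ) = topIdx t + d) :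
    raiseTop d t + Pi.single j 1 = t + Pi.single j' 1 := by
  have htj' : t j' = 0 := apply_eq_zero_of_topIdx_lt (by omega)
  have hjj' : j ≠ j' := fun h => by rw [← Fin.val_inj, hj, hj'] at h; omega
  have hi : ∀ i : Fin k, (i : ℕ) = topIdx t ↔ i = j := fun i => by rw [Fin.ext_iff, hj]
  have hi' : ∀ i : Fin k, (i : ℕ) = topIdx t + d ↔ i = j' := fun i => by rw [Fin.ext_iff, hj']
  ext i
  simp only [raiseTop, hi, hi', Pi.add_apply, Pi.single_apply]
  split_ifs <;> subst_vars <;> omega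

theorem weight_raiseTop (hd : 0 < d) (ht : t ≠ 0) (htop : topIdx t + d < k) :
    weight (raiseTop d t) = weight t + d := by
  obtain ⟨j, hj, htj⟩ := exists_val_eq_topIdx ht
  have h := congrArg weight (raiseTop_add_single hd hj htj (j' := ⟨_, htop⟩) rfl)
  simp only [weight_add, weight_single] at h
  omega

theorem sum_raiseTop (hd : 0 < d) (ht : t ≠ 0) (htop : topIdx t + d < k) :
    ∑ i, raiseTop d t i = ∑ i, t i := by
  obtain ⟨j, hj, htj⟩ := exists_val_eq_topIdx ht
  have h := congrArg (fun u => ∑ i, u i) (raiseTop_add_single hd hj htj (j' := ⟨_, htop⟩) rfl)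
  simpa only [Pi.add_apply, sum_add_distrib, Finset.sum_pi_single', mem_univ, if_true,
    add_left_inj] using h

theorem factorial_raiseTop_le (hd : 0 < d) (i : Fin k) :
    (raiseTop d t i).factorial ≤ (t i).factorial := by
  unfold raiseTop
  split_ifs with h
  · rw [apply_eq_zero_of_topIdx_lt (t := t) (i := i) (by omega), Nat.factorial_one,
      Nat.factorial_zero]
  · exact Nat.factorial_le (Nat.sub_le _ _)
  · exact le_rfl

theorem raiseTop_apply_of_val_eq {j' : Fin k} (hj' : (j' : ℕ) = topIdx t + d) :
    raiseTop d t j' = 1 :=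
  if_pos hj'

theorem topIdx_raiseTop (hd : 0 < d) (htop : topIdx t + d < k) :
    topIdx (raiseTop d t) = topIdx t + d := by
  refine le_antisymm (topIdx_le fun i hi => ?_) ?_
  · unfold raiseTop at hi
    split_ifs at hi with h1 h2
    · omega
    · omega
    · exact (le_topIdx hi).trans (Nat.le_add_right _ _)
  · exact le_topIdx (i := ⟨_, htop⟩) (by rw [raiseTop_apply_of_val_eq rfl]; exact one_ne_zero)

theorem raiseTop_injOn (hd : 0 < d) :
    Set.InjOn (raiseTop d) {t : Fin k → ℕ | t ≠ 0 ∧ topIdx t + d < k} := by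
  rintro t ⟨ht, htop⟩ u ⟨hu, hutop⟩ htu
  have hsame : topIdx t = topIdx u := by
    have := congrArg topIdx htu
    rw [topIdx_raiseTop hd htop, topIdx_raiseTop hd hutop] at this
    omega
  obtain ⟨j, hj, htj⟩ := exists_val_eq_topIdx ht
  obtain ⟨j₂, hj₂, huj₂⟩ := exists_val_eq_topIdx hu
  obtain rfl : j₂ = j := Fin.ext (by rw [hj, hj₂, hsame])
  have h1 := raiseTop_add_single hd hj htj (j' := ⟨_, htop⟩) rfl
  have h2 := raiseTop_add_single hd hj₂ huj₂ (j' := ⟨_, htop⟩) (by simp [hsame])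
  rw [htu, h2] at h1
  exact add_right_cancel h1.symm

end raiseTop

theorem ne_zero_and_topIdx_add_lt_of_mem_tuples {m : ℕ} (hmk : m < k) (hm : 0 < m)
    {t : Fin k → ℕ} (ht : t ∈ tuples k m) : t ≠ 0 ∧ topIdx t + (k - m) < k := by
  rw [mem_tuples] at ht
  have h0 : t ≠ 0 := by
    rintro rfl
    simp only [weight, Pi.zero_apply, mul_zero, sum_const_zero] at ht
    omega
  have := topIdx_lt_weight h0
  exact ⟨h0, by omega⟩

theorem poissonOrderH_lt_poissonOrderH_self {m : ℕ} {lam : ℝ} (hlam : 0 < lam) (hm : 0 < m)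
    (hmk : m < k) : poissonOrderH k m lam < poissonOrderH k k lam := by
  have hdom := fun t (ht : t ∈ tuples k m) => ne_zero_and_topIdx_add_lt_of_mem_tuples hmk hm ht
  have hd : 0 < k - m := by omega
  rw [poissonOrderH_eq_sum_tuples, poissonOrderH_eq_sum_tuples]
  refine sum_lt_sum_of_injOn (raiseTop (k - m))
    (fun t ht u hu => raiseTop_injOn hd (hdom t ht) (hdom u hu)) (fun t ht => ?_) (fun t ht => ?_)
    (b := Pi.single ⟨0, by omega⟩ k) ?_ (fun t ht => ?_) (term_pos hlam _)
    fun _ _ => (term_pos hlam _).le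
  · obtain ⟨h0, htop⟩ := hdom t ht
    rw [mem_coe, mem_tuples] at ht ⊢
    rw [weight_raiseTop hd h0 htop]
    omega
  · obtain ⟨h0, htop⟩ := hdom t ht
    exact term_le_term hlam.le (sum_raiseTop hd h0 htop) (factorial_raiseTop_le hd)
  · rw [mem_tuples, weight_single, zero_add, one_mul]
  · obtain ⟨h0, htop⟩ := hdom t ht
    intro h
    have := congrFun h ⟨_, htop⟩
    rw [raiseTop_apply_of_val_eq rfl, Pi.single_apply,
      if_neg (Fin.ne_of_val_ne (by dsimp only; omega))] at this
    exact one_ne_zero this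

theorem not_isMode {m : ℕ} {lam : ℝ} (hlam : 0 < lam) (hm : 0 < m) (hmk : m < k) :
    ¬ IsMode k lam m := fun hmode =>
  (hmode k).not_gt <|
    mul_lt_mul_of_pos_left (poissonOrderH_lt_poissonOrderH_self hlam hm hmk) (Real.exp_pos _)

end PoissonOrder

theorem stmt_1_general (k : ℕ) (lam : ℝ) (hlam : 0 < lam) :
    (∀ m : ℕ, 1 ≤ m → m ≤ k - 1 → ¬ IsMode k lam m) ∧
    (∀ m : ℕ, IsMode k lam m → m ≠ 0 → k ≤ m) :=
  ⟨fun m hm hmk => PoissonOrder.not_isMode hlam hm (by omega),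
    fun m hmode hm0 => not_lt.1 fun hmk => PoissonOrder.not_isMode hlam (by omega) hmk hmode⟩

theorem stmt_1 (k : ℕ) (hk : 2 ≤ k) (lam : ℝ) (hlam : 0 < lam) :
    (∀ m : ℕ, 1 ≤ m → m ≤ k - 1 → ¬ IsMode k lam m) ∧
    (∀ m : ℕ, IsMode k lam m → m ≠ 0 → k ≤ m) :=
  stmt_1_general k lam hlam
end

section
/- For every integer k ≥ 2 and every real λ > 0: if the median of the Poisson distribution of order k with parameter λ is zero (equivalently, if f_k(0;λ) ≥ 1/2), then its mode is uniquely zero, i.e. f_k(n;λ) < f_k(0;λ) for every integer n ≥ 1. -/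
/-!
For `n ≥ 1` every tuple contributing to `h_k(n;λ)` is a nonzero tuple with entries at most `n`,
so `h_k(n;λ) ≤ (∑_{j ≤ n} λ^j/j!)^k - 1 < e^{kλ} - 1`. Multiplying by `e^{-kλ} = f_k(0;λ)` gives
`f_k(n;λ) < 1 - f_k(0;λ) ≤ 1/2 ≤ f_k(0;λ)`.
-/

open Finset Fintype Nat Real

lemma poissonOrderH_zero (k : ℕ) (lam : ℝ) : poissonOrderH k 0 lam = 1 := by
  have hsupport : (piFinset fun _ : Fin k => range (0 + 1)).filter
      (fun t => ∑ i : Fin k, ((i : ℕ) + 1) * t i = 0) = {fun _ => 0} := by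
    ext t
    simp only [mem_filter, mem_piFinset, zero_add, mem_range, Nat.lt_one_iff, mem_singleton,
      funext_iff]
    exact ⟨fun h => h.1, fun h => ⟨h, by simp [h]⟩⟩
  rw [poissonOrderH, hsupport]
  simp

lemma poissonOrderPmf_zero (k : ℕ) (lam : ℝ) :
    poissonOrderPmf k 0 lam = exp (-(k * lam)) := by
  rw [poissonOrderPmf, poissonOrderH_zero, mul_one]

lemma sum_piFinset_range_pow_sum_div_prod_factorial (k N : ℕ) (x : ℝ) :
    ∑ t ∈ piFinset (fun _ : Fin k => range N), x ^ (∑ i, t i) / ∏ i, ((t i)! : ℝ) =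
      (∑ j ∈ range N, x ^ j / j !) ^ k := by
  rw [sum_pow']
  refine sum_congr rfl fun t _ => ?_
  rw [prod_div_distrib, prod_pow_eq_pow_sum]

lemma poissonOrderH_le_pow_sub_one {k n : ℕ} {lam : ℝ} (hlam : 0 ≤ lam) (hn : 1 ≤ n) :
    poissonOrderH k n lam ≤ (∑ j ∈ range (n + 1), lam ^ j / j !) ^ k - 1 := by
  set box := piFinset fun _ : Fin k => range (n + 1)
  set term : (Fin k → ℕ) → ℝ := fun t => lam ^ (∑ i, t i) / ∏ i, ((t i)! : ℝ)
  have hzero_mem : (fun _ => 0) ∈ box := by simp [box]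
  have hsupport : box.filter (fun t => ∑ i : Fin k, ((i : ℕ) + 1) * t i = n) ⊆
      box.erase fun _ => 0 := by
    intro t ht
    rw [mem_filter] at ht
    refine mem_erase.mpr ⟨fun ht0 => ?_, ht.1⟩
    simp only [ht0, mul_zero, sum_const_zero] at ht
    omega
  calc poissonOrderH k n lam
      ≤ ∑ t ∈ box.erase fun _ => 0, term t :=
        sum_le_sum_of_subset_of_nonneg hsupport fun _ _ _ => by positivity
    _ = ∑ t ∈ box, term t - term fun _ => 0 := sum_erase_eq_sub hzero_mem
    _ = (∑ j ∈ range (n + 1), lam ^ j / j !) ^ k - 1 := by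
        rw [sum_piFinset_range_pow_sum_div_prod_factorial]
        simp [term]

lemma Real.sum_range_pow_div_factorial_lt_exp {x : ℝ} (hx : 0 < x) (n : ℕ) :
    ∑ i ∈ range n, x ^ i / i ! < exp x := by
  have hle := sum_le_exp_of_nonneg hx.le (n + 1)
  rw [sum_range_succ] at hle
  have hlast : 0 < x ^ n / n ! := by positivity
  linarith

lemma poissonOrderH_lt_exp_sub_one {k n : ℕ} {lam : ℝ} (hk : k ≠ 0) (hlam : 0 < lam)
    (hn : 1 ≤ n) : poissonOrderH k n lam < exp (k * lam) - 1 := by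
  have hpow : (∑ j ∈ range (n + 1), lam ^ j / j !) ^ k < exp lam ^ k :=
    pow_lt_pow_left₀ (sum_range_pow_div_factorial_lt_exp hlam _)
      (sum_nonneg fun _ _ => by positivity) hk
  rw [← exp_nat_mul] at hpow
  linarith [poissonOrderH_le_pow_sub_one hlam.le hn (k := k)]

lemma poissonOrderPmf_lt_one_sub_poissonOrderPmf_zero {k n : ℕ} {lam : ℝ} (hk : k ≠ 0)
    (hlam : 0 < lam) (hn : 1 ≤ n) :
    poissonOrderPmf k n lam < 1 - poissonOrderPmf k 0 lam := by
  have hexp : exp (-(k * lam)) * exp (k * lam) = 1 := by rw [← exp_add]; simp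
  calc poissonOrderPmf k n lam
      < exp (-(k * lam)) * (exp (k * lam) - 1) :=
        mul_lt_mul_of_pos_left (poissonOrderH_lt_exp_sub_one hk hlam hn) (exp_pos _)
    _ = 1 - poissonOrderPmf k 0 lam := by rw [poissonOrderPmf_zero, mul_sub, hexp, mul_one]

theorem stmt_9 (k : ℕ) (hk : 2 ≤ k) (lam : ℝ) (hlam : 0 < lam)
    (hmed : (1 : ℝ) / 2 ≤ poissonOrderPmf k 0 lam) :
    ∀ n : ℕ, 1 ≤ n → poissonOrderPmf k n lam < poissonOrderPmf k 0 lam := by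
  intro n hn
  linarith [poissonOrderPmf_lt_one_sub_poissonOrderPmf_zero (by omega) hlam hn (k := k)]
end

section
/- For every integer k ≥ 1 and every real λ > 0, the variance of the Poisson distribution of order k with parameter λ equals k(k+1)(2k+1)λ/6: the series Σ_{n=0}^{∞} n²·f_k(n;λ) converges and Σ_{n=0}^{∞} n²·f_k(n;λ) − (k(k+1)λ/2)² = k(k+1)(2k+1)λ/6. -/
/-! Writing `N_i` for independent Poisson(λ) variables, `e^{-kλ} h_k(·;λ)` is the law of
`X = Σ i N_i`: grouping the tuples `t` by the weight `Σ (i+1) t_i` turns the series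
`Σ n² f_k(n;λ)` into a series over `Fin k → ℕ`, where `X²` expands into the pair terms
`i j N_i N_j`. Each of those series factorises into one-dimensional exponential series, giving
`E[N_i N_j] = λ² + [i = j] λ`, hence `E[X²] = λ² (Σ i)² + λ Σ i²`. -/

open Real Finset
open scoped Nat

theorem succ_mul_pow_succ_div_factorial (x : ℝ) (n : ℕ) :
    ((n + 1 : ℕ) : ℝ) * (x ^ (n + 1) / ((n + 1)! : ℝ)) = x * (x ^ n / (n ! : ℝ)) := by
  rw [Nat.factorial_succ]
  push_cast
  field_simp
  ring

theorem HasSum.natCast_mul_pow_div_factorial {g : ℕ → ℝ} {x s : ℝ}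
    (h : HasSum (fun n => g (n + 1) * (x ^ n / (n ! : ℝ))) s) :
    HasSum (fun n : ℕ => n * g n * (x ^ n / (n ! : ℝ))) (x * s) := by
  rw [← hasSum_nat_add_iff' 1, sum_range_one, Nat.cast_zero, zero_mul, zero_mul, sub_zero]
  refine (h.mul_left x).congr_fun fun n => ?_
  rw [mul_right_comm, succ_mul_pow_succ_div_factorial]
  ring

theorem hasSum_pow_div_factorial (x : ℝ) : HasSum (fun n => x ^ n / (n ! : ℝ)) (exp x) := by
  rw [exp_eq_exp_ℝ]
  exact NormedSpace.expSeries_div_hasSum_exp x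

theorem hasSum_natCast_mul_pow_div_factorial (x : ℝ) :
    HasSum (fun n : ℕ => n * (x ^ n / (n ! : ℝ))) (x * exp x) := by
  have h : HasSum (fun n => (1 : ℝ) * (x ^ n / (n ! : ℝ))) (exp x) := by
    simpa using hasSum_pow_div_factorial x
  simpa using h.natCast_mul_pow_div_factorial (g := fun _ => 1)

theorem hasSum_natCast_sq_mul_pow_div_factorial (x : ℝ) :
    HasSum (fun n : ℕ => n ^ 2 * (x ^ n / (n ! : ℝ))) ((x ^ 2 + x) * exp x) := by
  have h : HasSum (fun n : ℕ => ((n + 1 : ℕ) : ℝ) * (x ^ n / (n ! : ℝ))) (x * exp x + exp x) := by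
    refine ((hasSum_natCast_mul_pow_div_factorial x).add (hasSum_pow_div_factorial x)).congr_fun
      fun n => ?_
    push_cast
    ring
  convert h.natCast_mul_pow_div_factorial using 1
  · ext n; ring
  · ring

theorem hasSum_fin_prod_of_nonneg {k : ℕ} {β : Fin k → Type*} (f : (i : Fin k) → β i → ℝ)
    (a : Fin k → ℝ) (hf : ∀ i b, 0 ≤ f i b) (h : ∀ i, HasSum (f i) (a i)) :
    HasSum (fun t : (i : Fin k) → β i => ∏ i, f i (t i)) (∏ i, a i) := by
  induction k with
  | zero => simp
  | succ k ih =>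
    have htail := ih (fun i => f i.succ) (fun i => a i.succ) (fun i => hf i.succ)
      (fun i => h i.succ)
    have hhead : 0 ≤ f 0 := hf 0
    have htail' : 0 ≤ fun t : (i : Fin k) → β i.succ => ∏ i, f i.succ (t i) :=
      fun t => prod_nonneg fun i _ => hf i.succ (t i)
    have hsum := (h 0).summable.mul_of_nonneg htail.summable hhead htail'
    have hmul := (h 0).mul htail hsum
    rw [← (Fin.consEquiv β).hasSum_iff, Fin.prod_univ_succ]
    simpa [Function.comp_def, Fin.consEquiv, Fin.prod_univ_succ] using hmul

section PoissonProduct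

variable {k : ℕ} {x : ℝ}

theorem hasSum_prod_mul_prod_pow_div_factorial (hx : 0 ≤ x) (g : Fin k → ℕ → ℝ)
    (c : Fin k → ℝ) (hg : ∀ m n, 0 ≤ g m n)
    (h : ∀ m, HasSum (fun n => g m n * (x ^ n / (n ! : ℝ))) (c m * exp x)) :
    HasSum (fun t : Fin k → ℕ => (∏ m, g m (t m)) * ∏ m, x ^ t m / ((t m)! : ℝ))
      ((∏ m, c m) * exp (k * x)) := by
  have := hasSum_fin_prod_of_nonneg _ _ (fun m n => mul_nonneg (hg m n) (by positivity)) h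
  simpa only [prod_mul_distrib, prod_const, card_univ, Fintype.card_fin, ← exp_nat_mul] using this

theorem hasSum_apply_mul_apply_mul_prod_pow_div_factorial (hx : 0 ≤ x) (i j : Fin k) :
    HasSum (fun t : Fin k → ℕ => (t i : ℝ) * t j * ∏ m, x ^ t m / ((t m)! : ℝ))
      (exp (k * x) * (x ^ 2 + if i = j then x else 0)) := by
  rcases eq_or_ne i j with rfl | hij
  · have := hasSum_prod_mul_prod_pow_div_factorial hx
      (fun m n => if m = i then (n : ℝ) ^ 2 else 1) (fun m => if m = i then x ^ 2 + x else 1)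
      (fun m n => by positivity) fun m => by
        by_cases hm : m = i
        · simpa [hm] using hasSum_natCast_sq_mul_pow_div_factorial x
        · simpa [hm] using hasSum_pow_div_factorial x
    simpa [prod_ite_eq', sq, mul_comm] using this
  · have := hasSum_prod_mul_prod_pow_div_factorial hx
      (fun m n => (if m = i then (n : ℝ) else 1) * (if m = j then (n : ℝ) else 1))
      (fun m => (if m = i then x else 1) * (if m = j then x else 1)) (fun m n => by positivity)
      fun m => by
        by_cases hmi : m = i
        · subst hmi; simpa [hij] using hasSum_natCast_mul_pow_div_factorial x
        by_cases hmj : m = j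
        · subst hmj; simpa [hmi] using hasSum_natCast_mul_pow_div_factorial x
        · simpa [hmi, hmj] using hasSum_pow_div_factorial x
    simp only [prod_mul_distrib, prod_ite_eq', mem_univ, if_true] at this
    simpa [hij, sq, mul_comm, mul_left_comm, mul_assoc] using this

theorem hasSum_sum_mul_sq_mul_prod_pow_div_factorial (hx : 0 ≤ x) (a : Fin k → ℝ) :
    HasSum (fun t : Fin k → ℕ => (∑ i, a i * t i) ^ 2 * ∏ m, x ^ t m / ((t m)! : ℝ))
      (exp (k * x) * (x ^ 2 * (∑ i, a i) ^ 2 + x * ∑ i, a i ^ 2)) := by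
  have h := hasSum_sum (s := univ) fun (p : Fin k × Fin k) _ =>
    (hasSum_apply_mul_apply_mul_prod_pow_div_factorial hx p.1 p.2).mul_left (a p.1 * a p.2)
  have hsum : ∑ p : Fin k × Fin k,
      a p.1 * a p.2 * (exp (k * x) * (x ^ 2 + if p.1 = p.2 then x else 0))
      = exp (k * x) * (x ^ 2 * (∑ i, a i) ^ 2 + x * ∑ i, a i ^ 2) := by
    simp only [Fintype.sum_prod_type, mul_add, mul_ite, mul_zero, sum_add_distrib, sum_ite_eq,
      mem_univ, if_true]
    rw [sq (∑ i, a i), sum_mul_sum, mul_sum, mul_sum, mul_sum, mul_sum]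
    congr 1
    · simp only [mul_sum]
      exact sum_congr rfl fun i _ => sum_congr rfl fun j _ => by ring
    · exact sum_congr rfl fun i _ => by ring
  rw [hsum] at h
  refine h.congr_fun fun t => ?_
  rw [sq, sum_mul_sum, sum_mul, Fintype.sum_prod_type]
  exact sum_congr rfl fun i _ => by rw [sum_mul]; exact sum_congr rfl fun j _ => by ring

end PoissonProduct

theorem hasSum_poissonOrderH_fiber (k n : ℕ) (x : ℝ) :
    HasSum (fun t : {t : Fin k → ℕ // ∑ i : Fin k, ((i : ℕ) + 1) * t i = n} =>
      x ^ (∑ i, t.1 i) / ∏ i, ((t.1 i)! : ℝ)) (poissonOrderH k n x) := by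
  set s := (Fintype.piFinset fun _ : Fin k => range (n + 1)).filter
    (fun t => ∑ i : Fin k, ((i : ℕ) + 1) * t i = n)
  have mem_iff : ∀ t : Fin k → ℕ, ∑ i : Fin k, ((i : ℕ) + 1) * t i = n ↔ t ∈ (s : Set _) := by
    intro t
    simp only [s, coe_filter, Set.mem_ofPred_eq, Fintype.mem_piFinset, mem_range, iff_and_self]
    intro ht i
    have := single_le_sum (f := fun j : Fin k => ((j : ℕ) + 1) * t j)
      (fun j _ => Nat.zero_le _) (mem_univ i)
    nlinarith
  have h := s.hasSum fun t : Fin k → ℕ => x ^ (∑ i, t i) / ∏ i, ((t i)! : ℝ)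
  rw [← (Equiv.subtypeEquivRight mem_iff).hasSum_iff] at h
  exact h

theorem HasSum.mul_poissonOrderH {k : ℕ} {x s : ℝ} {g : ℕ → ℝ}
    (h : HasSum (fun t : Fin k → ℕ =>
      g (∑ i : Fin k, ((i : ℕ) + 1) * t i) * ∏ m, x ^ t m / ((t m)! : ℝ)) s) :
    HasSum (fun n => g n * poissonOrderH k n x) s := by
  rw [← (Equiv.sigmaFiberEquiv fun t : Fin k → ℕ => ∑ i : Fin k, ((i : ℕ) + 1) * t i).hasSum_iff]
    at h
  refine h.sigma fun n => ((hasSum_poissonOrderH_fiber k n x).mul_left (g n)).congr_fun ?_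
  rintro ⟨t, rfl⟩
  simp only [Function.comp_apply, Equiv.sigmaFiberEquiv_apply, prod_div_distrib,
    prod_pow_eq_pow_sum]

theorem sum_fin_cast_add_one (k : ℕ) : ∑ i : Fin k, ((i : ℝ) + 1) = (k : ℝ) * (k + 1) / 2 := by
  induction k with
  | zero => simp
  | succ k ih =>
    rw [Fin.sum_univ_castSucc]
    simp only [Fin.val_castSucc, Fin.val_last, ih]
    push_cast
    ring

theorem sum_fin_cast_add_one_sq (k : ℕ) :
    ∑ i : Fin k, ((i : ℝ) + 1) ^ 2 = (k : ℝ) * (k + 1) * (2 * k + 1) / 6 := by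
  induction k with
  | zero => simp
  | succ k ih =>
    rw [Fin.sum_univ_castSucc]
    simp only [Fin.val_castSucc, Fin.val_last, ih]
    push_cast
    ring

theorem stmt_13_general (k : ℕ) (lam : ℝ) (hlam : 0 < lam) :
    ∃ S : ℝ, HasSum (fun n : ℕ => (n : ℝ) ^ 2 * poissonOrderPmf k n lam) S ∧
      S - ((k : ℝ) * ((k : ℝ) + 1) * lam / 2) ^ 2
        = (k : ℝ) * ((k : ℝ) + 1) * (2 * (k : ℝ) + 1) * lam / 6 := by
  have hmoment :=
    hasSum_sum_mul_sq_mul_prod_pow_div_factorial hlam.le fun i : Fin k => (i : ℝ) + 1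
  rw [sum_fin_cast_add_one, sum_fin_cast_add_one_sq] at hmoment
  have hsum := (HasSum.mul_poissonOrderH (g := fun n : ℕ => (n : ℝ) ^ 2) <| hmoment.congr_fun
    fun t => by push_cast; ring).mul_left (exp (-(k * lam)))
  refine ⟨_, hsum.congr_fun fun n => by rw [poissonOrderPmf]; ring, ?_⟩
  rw [← mul_assoc, ← exp_add, neg_add_cancel, exp_zero]
  ring

theorem stmt_13 (k : ℕ) (hk : 1 ≤ k) (lam : ℝ) (hlam : 0 < lam) :
    ∃ S : ℝ, HasSum (fun n : ℕ => (n : ℝ) ^ 2 * poissonOrderPmf k n lam) S ∧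
      S - ((k : ℝ) * ((k : ℝ) + 1) * lam / 2) ^ 2
        = (k : ℝ) * ((k : ℝ) + 1) * (2 * (k : ℝ) + 1) * lam / 6 :=
  stmt_13_general k lam hlam
end
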